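/- arXiv:2404.12117 — 2 statements merged into one kernel-verified Lean document; each statement's English description precedes it below -/
import Mathlib

section
/- Let N ≥ 2 with |∑_{1 ≤ n < N} λ(n)λ(N−n)| = N − 1. Then for every divisor d of N with d ≥ 2, one has ∑_{1 ≤ k < d} λ(k)λ(d−k) = λ(d−1)·(d−1) and λ(N−1) = λ(d−1). -/
open Finset

def lam (n : ℕ) : ℤ := (-1) ^ (ArithmeticFunction.cardFactors n)

noncomputable def Slam (p : ℕ) (ξ : ℕ) : ℂ :=
  ∑ n ∈ Finset.Ico 1 p, (lam n : ℂ) * Complex.exp (2 * Real.pi * Complex.I * (n * ξ) / p)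

lemma lam_one : lam 1 = 1 := by simp [lam]

lemma lam_pm (n : ℕ) : lam n = 1 ∨ lam n = -1 := by
  rcases Nat.even_or_odd (ArithmeticFunction.cardFactors n) with he | ho
  · exact Or.inl (he.neg_one_pow)
  · exact Or.inr (ho.neg_one_pow)

lemma lam_mul {m n : ℕ} (hm : m ≠ 0) (hn : n ≠ 0) : lam (m * n) = lam m * lam n := by
  unfold lam
  rw [ArithmeticFunction.cardFactors_mul hm hn, pow_add]

lemma lam_sq (n : ℕ) : lam n * lam n = 1 := by
  rcases lam_pm n with h | h <;> rw [h] <;> ring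

lemma all_eq {s : Finset ℕ} {f : ℕ → ℤ} (hf : ∀ i ∈ s, f i = 1 ∨ f i = -1)
    (h : |∑ i ∈ s, f i| = s.card) :
    ∀ i ∈ s, ∀ j ∈ s, f i = f j := by
  rcases abs_eq (by positivity : (0:ℤ) ≤ s.card) |>.mp h with hs | hs
  · have hall : ∀ i ∈ s, f i = 1 := by
      by_contra hc
      push_neg at hc
      obtain ⟨i, hi, hi1⟩ := hc
      have hlt : ∑ i ∈ s, f i < ∑ _i ∈ s, (1:ℤ) := by
        refine Finset.sum_lt_sum (fun j hj => ?_) ⟨i, hi, ?_⟩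
        · rcases hf j hj with h1 | h1 <;> omega
        · rcases hf i hi with h1 | h1 <;> omega
      simp [hs] at hlt
    intro i hi j hj; rw [hall i hi, hall j hj]
  · have hall : ∀ i ∈ s, f i = -1 := by
      by_contra hc
      push_neg at hc
      obtain ⟨i, hi, hi1⟩ := hc
      have hlt : ∑ _i ∈ s, (-1:ℤ) < ∑ i ∈ s, f i := by
        refine Finset.sum_lt_sum (fun j hj => ?_) ⟨i, hi, ?_⟩
        · rcases hf j hj with h1 | h1 <;> omega
        · rcases hf i hi with h1 | h1 <;> omega
      simp [hs] at hlt
    intro i hi j hj; rw [hall i hi, hall j hj]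

theorem stmt_2 (N : ℕ) (hN : 2 ≤ N)
    (h : |∑ n ∈ Finset.Ico 1 N, lam n * lam (N - n)| = (N : ℤ) - 1) :
    ∀ d, d ∣ N → 2 ≤ d →
      (∑ k ∈ Finset.Ico 1 d, lam k * lam (d - k)) = lam (d - 1) * ((d : ℤ) - 1) ∧
      lam (N - 1) = lam (d - 1) := by
  have hcard : ((Finset.Ico 1 N).card : ℤ) = (N : ℤ) - 1 := by
    rw [Nat.card_Ico]; omega
  have hpm : ∀ n ∈ Finset.Ico 1 N, lam n * lam (N - n) = 1 ∨ lam n * lam (N - n) = -1 := by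
    intro n _
    rcases lam_pm n with h1 | h1 <;> rcases lam_pm (N - n) with h2 | h2 <;>
      simp [h1, h2]
  have key := all_eq hpm (by rw [hcard]; exact h)
  have h1mem : (1 : ℕ) ∈ Finset.Ico 1 N := by simp; omega
  -- every term equals lam (N-1)
  have hterm : ∀ n ∈ Finset.Ico 1 N, lam n * lam (N - n) = lam (N - 1) := by
    intro n hn
    have := key n hn 1 h1mem
    rwa [lam_one, one_mul] at this
  intro d hd hd2
  obtain ⟨m, hm⟩ := hd
  have hm0 : m ≠ 0 := by rintro rfl; omega
  have hterm' : ∀ k ∈ Finset.Ico 1 d, lam k * lam (d - k) = lam (N - 1) := by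
    intro k hk
    simp only [Finset.mem_Ico] at hk
    have hk0 : k ≠ 0 := by omega
    have hdk0 : d - k ≠ 0 := by omega
    have hmem : k * m ∈ Finset.Ico 1 N := by
      simp only [Finset.mem_Ico]
      constructor
      · have := Nat.one_le_iff_ne_zero.mpr (Nat.mul_ne_zero hk0 hm0); omega
      · calc k * m < d * m := (Nat.mul_lt_mul_right (Nat.pos_of_ne_zero hm0)).mpr hk.2
            _ = N := hm.symm
    have hsub : N - k * m = (d - k) * m := by
      rw [hm, ← Nat.sub_mul]
    have := hterm (k * m) hmem
    rw [hsub, lam_mul hk0 hm0, lam_mul hdk0 hm0] at this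
    rw [show lam k * lam m * (lam (d - k) * lam m)
          = lam k * lam (d - k) * (lam m * lam m) from by ring, lam_sq, mul_one] at this
    exact this
  have hNd : lam (N - 1) = lam (d - 1) := by
    have h1d : (1 : ℕ) ∈ Finset.Ico 1 d := by simp; omega
    have := hterm' 1 h1d
    rw [lam_one, one_mul] at this
    exact this.symm
  refine ⟨?_, hNd⟩
  rw [Finset.sum_congr rfl hterm', Finset.sum_const, Nat.card_Ico, hNd]
  have : ((d - 1 : ℕ) : ℤ) = (d : ℤ) - 1 := by omega
  rw [nsmul_eq_mul, this]; ring
end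

section
/- Let p > 3 be prime with |∑_{1 ≤ n < p} λ(n)λ(p−n)| = p − 1. Then for every m with 1 ≤ m < p and m ≡ 2p (mod 3), λ(2p−m) = λ(p−1)·λ(m). -/
open Finset

lemma lam_mul_s5 {a b : ℕ} (ha : a ≠ 0) (hb : b ≠ 0) : lam (a * b) = lam a * lam b := by
  unfold lam
  rw [ArithmeticFunction.cardFactors_mul ha hb, pow_add]

lemma lam_prime {q : ℕ} (hq : q.Prime) : lam q = -1 := by
  unfold lam
  rw [ArithmeticFunction.cardFactors_apply_prime hq, pow_one]

lemma lam_two_mul {n : ℕ} (hn : n ≠ 0) : lam (2 * n) = -lam n := by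
  rw [lam_mul_s5 two_ne_zero hn, lam_prime Nat.prime_two]; ring

lemma lam_three_mul {n : ℕ} (hn : n ≠ 0) : lam (3 * n) = -lam n := by
  rw [lam_mul_s5 three_ne_zero hn, lam_prime Nat.prime_three]; ring

lemma cancel_lam {a b e : ℤ} (ha : a * a = 1) (h : a * b = e) : b = a * e := by
  calc b = (a * a) * b := by rw [ha]; ring
  _ = a * (a * b) := by ring
  _ = a * e := by rw [h]

theorem stmt_5 (p : ℕ) (hp : p.Prime) (hp3 : 3 < p)
    (h : |∑ n ∈ Finset.Ico 1 p, lam n * lam (p - n)| = (p : ℤ) - 1) :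
    ∀ m, 1 ≤ m → m < p → m % 3 = (2 * p) % 3 →
      lam (2 * p - m) = lam (p - 1) * lam m := by
  have hp2 := hp.two_le
  have hpodd : p % 2 = 1 := Nat.odd_iff.mp (hp.odd_of_ne_two (by omega))
  set c : ℤ := lam (p - 1) with hc
  have hcsq : c * c = 1 := lam_sq _
  have hcard : (Finset.Ico 1 p).card = p - 1 := by simp
  have hcast : ((p - 1 : ℕ) : ℤ) = (p : ℤ) - 1 := by omega
  have hterm : ∀ n, lam n * lam (p - n) = 1 ∨ lam n * lam (p - n) = -1 := by
    intro n
    rcases lam_pm n with h1 | h1 <;> rcases lam_pm (p - n) with h2 | h2 <;>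
      simp [h1, h2]
  -- the key structural consequence of h
  have key : ∀ n, 1 ≤ n → n < p → lam (p - n) = c * lam n := by
    have habs := (abs_eq (by omega)).mp h
    rcases habs with h1 | h1
    · -- all terms equal 1
      have hz : ∑ n ∈ Finset.Ico 1 p, (1 - lam n * lam (p - n)) = 0 := by
        rw [Finset.sum_sub_distrib, h1, Finset.sum_const, hcard, nsmul_eq_mul, mul_one,
          hcast, sub_self]
      have hall := (Finset.sum_eq_zero_iff_of_nonneg (by
        intro n _
        rcases hterm n with ht | ht <;> rw [ht] <;> norm_num)).mp hz
      have hall' : ∀ n ∈ Finset.Ico 1 p, lam n * lam (p - n) = 1 := by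
        intro n hn
        have := hall n hn
        linarith
      have hc1 : c = 1 := by
        have := hall' 1 (by simp; omega)
        rw [lam_one, one_mul] at this
        rw [hc, this]
      intro n h1n hnp
      have := cancel_lam (lam_sq n) (hall' n (by simp; omega))
      rw [this, hc1]; ring
    · -- all terms equal -1
      have hz : ∑ n ∈ Finset.Ico 1 p, (lam n * lam (p - n) + 1) = 0 := by
        rw [Finset.sum_add_distrib, h1, Finset.sum_const, hcard, nsmul_eq_mul, mul_one,
          hcast]
        ring
      have hall := (Finset.sum_eq_zero_iff_of_nonneg (by
        intro n _
        rcases hterm n with ht | ht <;> rw [ht] <;> norm_num)).mp hz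
      have hall' : ∀ n ∈ Finset.Ico 1 p, lam n * lam (p - n) = -1 := by
        intro n hn
        have := hall n hn
        linarith
      have hc1 : c = -1 := by
        have := hall' 1 (by simp; omega)
        rw [lam_one, one_mul] at this
        rw [hc, this]
      intro n h1n hnp
      have := cancel_lam (lam_sq n) (hall' n (by simp; omega))
      rw [this, hc1]; ring
  intro m hm1 hmp hmod
  rcases Nat.even_or_odd m with hme | hmo
  · -- m even
    obtain ⟨m', hm'⟩ := hme
    have hm'eq : m = 2 * m' := by omega
    have hm'0 : m' ≠ 0 := by omega
    have e1 : 2 * p - m = 2 * (p - m') := by omega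
    have e2 : lam (p - m') = c * lam m' := key m' (by omega) (by omega)
    rw [e1, lam_two_mul (by omega), e2, hm'eq, lam_two_mul hm'0]
    ring
  · -- m odd
    have hmodd : m % 2 = 1 := Nat.odd_iff.mp hmo
    have h6 : (p + m) % 6 = 0 := by omega
    set j : ℕ := (p + m) / 6 with hj
    have hj6 : p + m = 6 * j := by omega
    have hj1 : 1 ≤ j := by omega
    have h2j : 2 * j < p := by omega
    -- left side: 2p - m = 3 * (p - 2j)
    have e1 : 2 * p - m = 3 * (p - 2 * j) := by omega
    have e2 : lam (p - 2 * j) = c * lam (2 * j) := key (2 * j) (by omega) h2j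
    have lhs : lam (2 * p - m) = c * lam j := by
      rw [e1, lam_three_mul (by omega), e2, lam_two_mul (by omega)]
      ring
    -- right side: λ m = λ j
    set i : ℕ := (p - m) / 2 with hi
    have hi2 : p - m = 2 * i := by omega
    have hi1 : 1 ≤ i := by omega
    have hip : i < p := by omega
    have e3 : lam (p - m) = c * lam m := key m hm1 hmp
    have e4 : lam (p - i) = c * lam i := key i hi1 hip
    have e5 : p - i = 3 * j := by omega
    have e6 : lam (p - m) = -lam i := by rw [hi2, lam_two_mul (by omega)]
    have e7 : lam (3 * j) = -lam j := lam_three_mul (by omega)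
    -- from e4, e5, e7 : -λ j = c * λ i, so λ i = c * (-λ j)
    have e8 : lam i = c * (-lam j) := by
      have : c * lam i = -lam j := by rw [← e4, e5, e7]
      have := cancel_lam hcsq this
      linarith
    -- c * λ m = λ(p-m) = -λ i = -c*(-λ j) = c * λ j  ⟹ λ m = λ j
    have e9 : lam m = lam j := by
      have h1 : c * lam m = c * lam j := by
        rw [← e3, e6, e8]; ring
      have h2 := cancel_lam hcsq h1
      rw [h2]
      calc c * (c * lam j) = (c * c) * lam j := by ring
      _ = lam j := by rw [hcsq]; ring
    rw [lhs, e9]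
end
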